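/- Let 2 ≤ g₁ < g₂ < … < g_e be coprime positive integers forming a minimal generating system of the numerical semigroup S = ⟨g₁,…,g_e⟩, let F be its Frobenius number and n = |S ∩ [0, F]|. Then F + 1 ≤ e·n². -/
import Mathlib


/-- **Theorem 1(2).**
Let `2 ≤ g₁ < g₂ < … < g_e` be coprime positive integers forming a minimal generating
system of the numerical semigroup `S = ⟨g₁,…,g_e⟩`, let `F = max (ℤ \ S)` be the
Frobenius number and `n = |S ∩ [0, F]|`.  Then `F + 1 ≤ e·n²`. -/
theorem wilf_bound_n_sq
    (e : ℕ) (he : 2 ≤ e) (g : Fin e → ℤ)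
    (hg2 : 2 ≤ g ⟨0, by omega⟩)
    (hmono : StrictMono g)
    (hcop : Finset.univ.gcd g = 1)
    (S : Set ℤ)
    (hS : S = {x : ℤ | ∃ a : Fin e → ℕ, x = ∑ i, (a i : ℤ) * g i})
    (hmingen : ∀ i : Fin e, ¬∃ a : Fin e → ℕ, a i = 0 ∧ g i = ∑ j, (a j : ℤ) * g j)
    (F : ℤ) (hF : F ∉ S) (hFmax : ∀ x : ℤ, x ∉ S → x ≤ F)
    (n : ℕ) (hn : n = (S ∩ Set.Icc 0 F).ncard) :
    F + 1 ≤ (e : ℤ) * (n : ℤ) ^ 2 := by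
  classical
  set i₀ : Fin e := ⟨0, by omega⟩ with hi₀
  set m : ℤ := g i₀ with hm
  have hm2 : 2 ≤ m := hg2
  have hgm : ∀ i, m ≤ g i := fun i => hmono.monotone (by simp [hi₀, Fin.le_def])
  have hgpos : ∀ i, 0 < g i := fun i => lt_of_lt_of_le (by omega) (hgm i)
  have hmem : ∀ x, x ∈ S ↔ ∃ a : Fin e → ℕ, x = ∑ i, (a i : ℤ) * g i := by
    intro x; rw [hS]; exact Iff.rfl
  have hS0 : (0:ℤ) ∈ S := (hmem 0).2 ⟨0, by simp⟩
  have hSnn : ∀ x ∈ S, 0 ≤ x := by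
    intro x hx
    obtain ⟨a, rfl⟩ := (hmem x).1 hx
    exact Finset.sum_nonneg fun i _ => mul_nonneg (by positivity) (hgpos i).le
  have hmul : ∀ (k : ℕ) (i : Fin e), (k : ℤ) * g i ∈ S := by
    intro k i
    refine (hmem _).2 ⟨fun j => if j = i then k else 0, ?_⟩
    rw [Finset.sum_eq_single i] <;> simp +contextual
  have hsub : ∀ x ∈ S, x ≠ 0 → ∃ i, x - g i ∈ S := by
    intro x hx hx0
    obtain ⟨a, rfl⟩ := (hmem _).1 hx
    have hex : ∃ i, a i ≠ 0 := by
      by_contra h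
      push_neg at h
      simp [h] at hx0
    obtain ⟨i, hi⟩ := hex
    have h1 : (1:ℕ) ≤ a i := Nat.one_le_iff_ne_zero.2 hi
    refine ⟨i, (hmem _).2 ⟨fun j => if j = i then a i - 1 else a j, ?_⟩⟩
    have key : ∀ j : Fin e, ((if j = i then a i - 1 else a j : ℕ) : ℤ) * g j
        = (a j : ℤ) * g j - (if j = i then g i else 0) := by
      intro j
      split
      · next h => subst h; push_cast [h1]; ring
      · ring
    simp only [key, Finset.sum_sub_distrib, Finset.sum_ite_eq', Finset.mem_univ, if_true]
  have h1S : (1:ℤ) ∉ S := by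
    intro h
    obtain ⟨a, ha⟩ := (hmem 1).1 h
    rcases eq_or_ne a 0 with rfl | hne
    · simp at ha
    · obtain ⟨i, hi⟩ := Function.ne_iff.1 hne
      have hle : (a i : ℤ) * g i ≤ 1 := ha ▸ Finset.single_le_sum
        (f := fun j => (a j : ℤ) * g j)
        (fun j _ => mul_nonneg (by positivity) (hgpos j).le) (Finset.mem_univ i)
      have hai : 1 ≤ (a i : ℤ) := by
        exact_mod_cast Nat.one_le_iff_ne_zero.2 (by simpa using hi)
      nlinarith [hgm i]
  have hF1 : 1 ≤ F := hFmax 1 h1S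
  have hbig : ∀ x, F < x → x ∈ S := by
    intro x hx
    by_contra h
    exact absurd (hFmax x h) (not_le.2 hx)
  have hmne : m ≠ 0 := by omega
  -- least element of S in each residue class mod m
  have hleast : ∀ r : ℤ, ∃ w, (w ∈ S ∧ w % m = r % m) ∧ ∀ z, (z ∈ S ∧ z % m = r % m) → w ≤ z := by
    intro r
    refine Int.exists_least_of_bdd ⟨0, fun z hz => hSnn z hz.1⟩ ?_
    refine ⟨F + 1 + (r - (F+1)) % m, hbig _ (by have := Int.emod_nonneg (r - (F+1)) hmne; omega), ?_⟩
    conv_lhs => rw [Int.add_emod, Int.emod_emod_of_dvd _ dvd_rfl, ← Int.add_emod]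
    ring_nf
  choose W hW using hleast
  have hW1 : ∀ r, W r ∈ S := fun r => (hW r).1.1
  have hW2 : ∀ r, W r % m = r % m := fun r => (hW r).1.2
  have hW3 : ∀ r z, z ∈ S → z % m = r % m → W r ≤ z := fun r z h1 h2 => (hW r).2 z ⟨h1, h2⟩
  have hIdx : ∀ r : ℤ, ∃ i : Fin e, (W r ≠ 0 → W r - g i ∈ S) := by
    intro r
    rcases eq_or_ne (W r) 0 with h | h
    · exact ⟨i₀, fun h' => absurd h h'⟩
    · obtain ⟨i, hi⟩ := hsub _ (hW1 r) h
      exact ⟨i, fun _ => hi⟩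
  choose I hI using hIdx
  -- the finset of small elements
  set Nf : Finset ℤ := (Finset.Icc 0 F).filter (· ∈ S) with hNf
  have hNcard : n = Nf.card := by
    rw [hn]
    have hset : S ∩ Set.Icc 0 F = ↑Nf := by
      ext x
      simp only [hNf, Finset.coe_filter, Finset.mem_Icc, Set.mem_inter_iff, Set.mem_setOf_eq,
        Set.mem_Icc]
      tauto
    rw [hset, Set.ncard_coe_finset]
  have h0N : (0:ℤ) ∈ Nf := by
    simp only [hNf, Finset.mem_filter, Finset.mem_Icc]
    exact ⟨⟨le_refl 0, by omega⟩, hS0⟩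
  -- Step C : q+1 ≤ n where q = F / m
  set q : ℤ := F / m with hq
  have hdm := Int.mul_ediv_add_emod F m
  have hrm := Int.emod_nonneg F hmne
  have hrm2 := Int.emod_lt_of_pos F (show 0 < m by omega)
  have hq0 : 0 ≤ q := Int.ediv_nonneg (by omega) (by omega)
  have hmapC : ∀ k ∈ Finset.Icc (0:ℤ) q, k * m ∈ Nf := by
    intro k hk
    simp only [Finset.mem_Icc] at hk
    have hkS : k * m ∈ S := by
      have := hmul k.toNat i₀
      rwa [Int.toNat_of_nonneg hk.1] at this
    have hkF : k * m ≤ F := by nlinarith [hk.2]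
    simp only [hNf, Finset.mem_filter, Finset.mem_Icc]
    exact ⟨⟨mul_nonneg hk.1 (by omega), hkF⟩, hkS⟩
  have hinjC : Set.InjOn (· * m) (Finset.Icc (0:ℤ) q) := by
    intro a _ b _ hab
    simpa [hmne] using mul_right_cancel₀ hmne hab
  have hcardC := Finset.card_le_card_of_injOn _ hmapC hinjC
  rw [Int.card_Icc] at hcardC
  have hqn : q + 1 ≤ (Nf.card : ℤ) := by omega
  have hFnm : F + 1 ≤ (Nf.card : ℤ) * m := by nlinarith
  -- Step D : m ≤ e * n
  have hmapD : ∀ r ∈ Finset.Ico (1:ℤ) m,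
      (W r - g (I r), I r) ∈ (Nf ×ˢ (Finset.univ : Finset (Fin e))).erase ((0:ℤ), i₀) := by
    intro r hr
    simp only [Finset.mem_Ico] at hr
    have hrr : r % m = r := Int.emod_eq_of_lt (by omega) hr.2
    have hWr0 : W r ≠ 0 := by
      intro h
      have := hW2 r
      rw [h, Int.zero_emod, hrr] at this
      omega
    have hsS : W r - g (I r) ∈ S := hI r hWr0
    have hWmF : W r - m ≤ F := by
      refine hFmax _ fun hc => ?_
      have := hW3 r (W r - m) hc (by rw [Int.sub_emod, Int.emod_self, sub_zero, Int.emod_emod_of_dvd _ dvd_rfl]; exact hW2 r)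
      omega
    have hsF : W r - g (I r) ≤ F := by have := hgm (I r); omega
    have hs0 : 0 ≤ W r - g (I r) := hSnn _ hsS
    refine Finset.mem_erase.2 ⟨?_, ?_⟩
    · intro hc
      rw [Prod.mk.injEq] at hc
      have hWm : W r = m := by
        have h2 : g (I r) = m := by rw [hc.2]
        omega
      have := hW2 r
      rw [hWm, Int.emod_self, hrr] at this
      omega
    · refine Finset.mem_product.2 ⟨?_, Finset.mem_univ _⟩
      simp only [hNf, Finset.mem_filter, Finset.mem_Icc]
      exact ⟨⟨hs0, hsF⟩, hsS⟩
  have hinjD : Set.InjOn (fun r => (W r - g (I r), I r)) (Finset.Ico (1:ℤ) m) := by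
    intro r1 h1 r2 h2 hEq
    simp only [Finset.coe_Ico, Set.mem_Ico] at h1 h2
    rw [Prod.mk.injEq] at hEq
    have hIeq : I r1 = I r2 := hEq.2
    have hWeq : W r1 = W r2 := by have := hEq.1; rw [hIeq] at this; omega
    have e1 : r1 % m = r2 % m := by rw [← hW2 r1, ← hW2 r2, hWeq]
    rw [Int.emod_eq_of_lt (by omega) h1.2, Int.emod_eq_of_lt (by omega) h2.2] at e1
    exact e1
  have hcardD := Finset.card_le_card_of_injOn _ hmapD hinjD
  rw [Int.card_Ico, Finset.card_erase_of_mem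
      (Finset.mem_product.2 ⟨h0N, Finset.mem_univ _⟩), Finset.card_product,
      Finset.card_univ, Fintype.card_fin] at hcardD
  have hNf1 : 1 ≤ Nf.card := Finset.card_pos.2 ⟨0, h0N⟩
  have hmen : m ≤ (Nf.card : ℤ) * e := by
    have h1 : 1 ≤ Nf.card * e := by nlinarith
    have := hcardD
    omega
  -- conclude
  rw [hNcard]
  nlinarith [Nat.cast_nonneg (α := ℤ) Nf.card]
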